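/- For n ≥ 3 and v in the open unit ball of ℝⁿ, the Möbius matrix equals the normalized squared Lorentz boost: μ_{n,v} = B(v)² / tr(B(v)²), where tr B(v)² = (n−3) + 4γ_v². -/

import Mathlib

/-! Both `boost v` and the block matrix inside `mobius v` have the shape
`[[a, b vᵀ], [b v, d I + c v vᵀ]]`, and this family is closed under scalar multiplication and
squaring, the new parameters being polynomials in `a, b, c, d` and `v ⬝ᵥ v = ‖v‖²`. With
`γ² ‖v‖² = γ² - 1`, the square of the boost has parameters `(2γ² - 1, 2γ², 2γ², 1)`, so its trace
is `(n - 3) + 4γ²`, and comparing parameters with those of `mobius v` gives the identity. -/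

open scoped RealInnerProductSpace

noncomputable def gam {n : ℕ} (v : EuclideanSpace ℝ (Fin n)) : ℝ :=
  1 / Real.sqrt (1 - ‖v‖ ^ 2)

noncomputable def eAdd {n : ℕ} (u v : EuclideanSpace ℝ (Fin n)) :
    EuclideanSpace ℝ (Fin n) :=
  (1 / (1 + ⟪u, v⟫)) •
    (u + (1 / gam u) • v + ((gam u / (1 + gam u)) * ⟪u, v⟫) • u)

noncomputable def boost {n : ℕ} (v : EuclideanSpace ℝ (Fin n)) :
    Matrix (Unit ⊕ Fin n) (Unit ⊕ Fin n) ℝ :=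
  Matrix.fromBlocks
    (Matrix.of fun _ _ => gam v)
    (Matrix.of fun _ j => gam v * v j)
    (Matrix.of fun i _ => gam v * v i)
    (1 + Matrix.of fun i j => (gam v) ^ 2 / (1 + gam v) * v i * v j)

noncomputable def mobius {n : ℕ} (v : EuclideanSpace ℝ (Fin n)) :
    Matrix (Unit ⊕ Fin n) (Unit ⊕ Fin n) ℝ :=
  (2 * (gam v) ^ 2 / (((n : ℝ) - 3) + 4 * (gam v) ^ 2)) •
    Matrix.fromBlocks
      (Matrix.of fun _ _ => 1 - 1 / (2 * (gam v) ^ 2))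
      (Matrix.of fun _ j => v j)
      (Matrix.of fun i _ => v i)
      ((1 / (2 * (gam v) ^ 2)) • 1 + Matrix.of fun i j => v i * v j)

namespace Matrix

variable {R ι : Type*} [CommRing R] [DecidableEq ι]

def rankOneBlock (v : ι → R) (a b c d : R) : Matrix (Unit ⊕ ι) (Unit ⊕ ι) R :=
  fromBlocks (of fun _ _ => a) (of fun _ j => b * v j) (of fun i _ => b * v i)
    (d • 1 + of fun i j => c * v i * v j)

theorem smul_rankOneBlock (v : ι → R) (k a b c d : R) :
    k • rankOneBlock v a b c d = rankOneBlock v (k * a) (k * b) (k * c) (k * d) := by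
  ext (_ | i) (_ | j) <;> simp [rankOneBlock, one_apply, mul_add, mul_ite, ← mul_assoc]

variable [Fintype ι]

theorem rankOneBlock_sq (v : ι → R) (a b c d : R) :
    rankOneBlock v a b c d ^ 2 =
      rankOneBlock v (a ^ 2 + b ^ 2 * (v ⬝ᵥ v)) (b * (a + d + c * (v ⬝ᵥ v)))
        (b ^ 2 + 2 * c * d + c ^ 2 * (v ⬝ᵥ v)) (d ^ 2) := by
  ext (_ | i) (_ | j) <;>
    simp [rankOneBlock, sq, mul_apply, one_apply, add_mul, mul_add, Finset.sum_add_distrib,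
      ite_mul, mul_ite, dotProduct, Finset.mul_sum, Finset.sum_mul] <;>
    simp only [mul_comm, mul_left_comm] <;> ring

theorem trace_rankOneBlock (v : ι → R) (a b c d : R) :
    (rankOneBlock v a b c d).trace = a + Fintype.card ι * d + c * (v ⬝ᵥ v) := by
  simp [rankOneBlock, trace, Fintype.sum_sum_type, dotProduct, Finset.sum_add_distrib,
    Finset.mul_sum, add_assoc, mul_assoc]

end Matrix

open Matrix

theorem EuclideanSpace.ofLp_dotProduct_self {ι : Type*} [Fintype ι] (v : EuclideanSpace ℝ ι) :
    v.ofLp ⬝ᵥ v.ofLp = ‖v‖ ^ 2 := by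
  rw [← real_inner_self_eq_norm_sq]
  rfl

section

variable {n : ℕ} {v : EuclideanSpace ℝ (Fin n)}

theorem gam_pos (hv : ‖v‖ < 1) : 0 < gam v := by
  have : ‖v‖ ^ 2 < 1 := by nlinarith [norm_nonneg v]
  unfold gam
  have := Real.sqrt_pos.2 (sub_pos.2 this)
  positivity

theorem gam_sq_mul_norm_sq (hv : ‖v‖ < 1) : gam v ^ 2 * ‖v‖ ^ 2 = gam v ^ 2 - 1 := by
  have : ‖v‖ ^ 2 < 1 := by nlinarith [norm_nonneg v]
  have hsq : gam v ^ 2 = 1 / (1 - ‖v‖ ^ 2) := by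
    rw [gam, div_pow, one_pow, Real.sq_sqrt (by linarith)]
  rw [hsq]
  field_simp [(by linarith : 1 - ‖v‖ ^ 2 ≠ 0)]
  ring

theorem boost_eq_rankOneBlock (v : EuclideanSpace ℝ (Fin n)) :
    boost v = rankOneBlock v.ofLp (gam v) (gam v) (gam v ^ 2 / (1 + gam v)) 1 := by
  simp [boost, rankOneBlock]

theorem mobius_eq_smul_rankOneBlock (v : EuclideanSpace ℝ (Fin n)) :
    mobius v = (2 * gam v ^ 2 / ((n : ℝ) - 3 + 4 * gam v ^ 2)) •
      rankOneBlock v.ofLp (1 - 1 / (2 * gam v ^ 2)) 1 1 (1 / (2 * gam v ^ 2)) := by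
  simp [mobius, rankOneBlock]

theorem boost_sq (hv : ‖v‖ < 1) :
    boost v ^ 2 = rankOneBlock v.ofLp (2 * gam v ^ 2 - 1) (2 * gam v ^ 2) (2 * gam v ^ 2) 1 := by
  have hγ := gam_pos hv
  have hγv := gam_sq_mul_norm_sq hv
  rw [boost_eq_rankOneBlock, rankOneBlock_sq, EuclideanSpace.ofLp_dotProduct_self]
  congr 1
  · linear_combination hγv
  · field_simp
    linear_combination hγv
  · field_simp
    linear_combination hγv
  · ring

theorem trace_boost_sq (hv : ‖v‖ < 1) :
    (boost v ^ 2).trace = (n : ℝ) - 3 + 4 * gam v ^ 2 := by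
  rw [boost_sq hv, trace_rankOneBlock, EuclideanSpace.ofLp_dotProduct_self, Fintype.card_fin]
  linear_combination 2 * gam_sq_mul_norm_sq hv

end

theorem mobius_eq_normalized_boost_sq_general {n : ℕ}
    (v : EuclideanSpace ℝ (Fin n)) (hv : ‖v‖ < 1) :
    mobius v = ((boost v ^ 2).trace)⁻¹ • (boost v ^ 2) ∧
      (boost v ^ 2).trace = ((n : ℝ) - 3) + 4 * (gam v) ^ 2 := by
  have hγ := (gam_pos hv).ne'
  refine ⟨?_, trace_boost_sq hv⟩
  rw [trace_boost_sq hv, boost_sq hv, mobius_eq_smul_rankOneBlock, smul_rankOneBlock,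
    smul_rankOneBlock]
  congr 1 <;> field_simp

theorem mobius_eq_normalized_boost_sq {n : ℕ} (hn : 3 ≤ n)
    (v : EuclideanSpace ℝ (Fin n)) (hv : ‖v‖ < 1) :
    mobius v = ((boost v ^ 2).trace)⁻¹ • (boost v ^ 2) ∧
      (boost v ^ 2).trace = ((n : ℝ) - 3) + 4 * (gam v) ^ 2 :=
  mobius_eq_normalized_boost_sq_general v hv
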